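/- arXiv:1412.5697 — 3 statements merged into one kernel-verified Lean document; each statement's English description precedes it below -/
import Mathlib

section
/- Let P be a finite set of n points in ℝ^d with distinct pairwise distances, let q ∉ P, and let c be the number of cones of opening angle at most π/3 needed to cover ℝ^d around q. Then the number of reverse k-nearest neighbors of q, i.e., |{p ∈ P : q is among the k nearest neighbors of p in (P ∪ {q}) \ {p}}|, is at most c·k. -/
open scoped RealInnerProductSpace

lemma key_ineq {E : Type*} [NormedAddCommGroup E] [InnerProductSpace ℝ E]
    (u w : E) (hu : u ≠ 0) (hw : w ≠ 0)
    (h : InnerProductGeometry.angle u w ≤ Real.pi / 3) (hle : ‖u‖ ≤ ‖w‖) :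
    ‖u - w‖ ≤ ‖w‖ := by
  have h0 := InnerProductGeometry.angle_nonneg u w
  have hpi : Real.pi / 3 ≤ Real.pi := by
    have := Real.pi_pos; linarith
  have hcos : (1:ℝ)/2 ≤ Real.cos (InnerProductGeometry.angle u w) := by
    have := Real.cos_le_cos_of_nonneg_of_le_pi h0 hpi h
    rwa [Real.cos_pi_div_three] at this
  have hca := InnerProductGeometry.cos_angle u w
  have hu' : 0 < ‖u‖ := norm_pos_iff.mpr hu
  have hw' : 0 < ‖w‖ := norm_pos_iff.mpr hw
  have hinner : ‖u‖ * ‖w‖ / 2 ≤ ⟪u, w⟫ := by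
    rw [hca] at hcos
    rw [le_div_iff₀ (by positivity)] at hcos
    linarith [hcos]
  have hsq : ‖u - w‖ ^ 2 ≤ ‖w‖ ^ 2 := by
    have hns := @norm_sub_sq_real E _ _ u w
    nlinarith [hns, hinner, hu', hw', hle]
  nlinarith [norm_nonneg (u - w), hw'.le, hsq]

/-- The number of reverse k-nearest neighbors of a query point `q ∉ P` is at
most `c·k`, where `c` is the number of cones of opening angle at most `π/3` with apex `q`
covering `ℝ^d`. -/
theorem stmt6 (d c k n : ℕ) (hk : 1 ≤ k)
    (P : Finset (EuclideanSpace ℝ (Fin d))) (hn : P.card = n)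
    (q : EuclideanSpace ℝ (Fin d)) (hq : q ∉ P)
    (hdist : ∀ a ∈ insert q (P : Set (EuclideanSpace ℝ (Fin d))), ∀ b ∈ insert q (P : Set (EuclideanSpace ℝ (Fin d))), ∀ c' ∈ insert q (P : Set (EuclideanSpace ℝ (Fin d))), ∀ e ∈ insert q (P : Set (EuclideanSpace ℝ (Fin d))),
      dist a b = dist c' e →
      (a = c' ∧ b = e) ∨ (a = e ∧ b = c') ∨ (a = b ∧ c' = e))
    (C : Fin c → Set (EuclideanSpace ℝ (Fin d)))
    (x : Fin c → EuclideanSpace ℝ (Fin d))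
    (hx : ∀ l, ‖x l‖ = 1) (haxis : ∀ l, x l ∈ C l)
    (hcone : ∀ l, ∀ u ∈ C l, ∀ t : ℝ, 0 ≤ t → t • u ∈ C l)
    (hangle : ∀ l, ∀ u ∈ C l, ∀ w ∈ C l, u ≠ 0 → w ≠ 0 →
      InnerProductGeometry.angle u w ≤ Real.pi / 3)
    (hcover : ∀ y : EuclideanSpace ℝ (Fin d), ∃ l, y ∈ C l) :
    ({p : EuclideanSpace ℝ (Fin d) | p ∈ P ∧
        ({s : EuclideanSpace ℝ (Fin d) |
            s ∈ insert q (P : Set (EuclideanSpace ℝ (Fin d))) ∧ s ≠ p ∧ dist p s < dist p q}).ncard < k}).ncard ≤ c * k := by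
  classical
  choose f hf using fun y : EuclideanSpace ℝ (Fin d) => hcover y
  set cond : EuclideanSpace ℝ (Fin d) → Prop := fun p =>
    ({s : EuclideanSpace ℝ (Fin d) |
        s ∈ insert q (P : Set (EuclideanSpace ℝ (Fin d))) ∧ s ≠ p ∧ dist p s < dist p q}).ncard < k
    with hcond
  set R : Finset (EuclideanSpace ℝ (Fin d)) := P.filter cond with hRdef
  have hset : ({p : EuclideanSpace ℝ (Fin d) | p ∈ P ∧ cond p}) = ↑R := by
    ext p; simp [hRdef]
  rw [hset, Set.ncard_coe_finset]
  -- per-cone bound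
  have hper : ∀ l : Fin c, (R.filter (fun p => f (p - q) = l)).card ≤ k := by
    intro l
    by_contra hcon
    push_neg at hcon
    set Q := R.filter (fun p => f (p - q) = l) with hQdef
    have hQne : Q.Nonempty := Finset.card_pos.mp (by omega)
    obtain ⟨p, hpQ, hpmax⟩ := Q.exists_max_image (fun p => dist p q) hQne
    have hpP : p ∈ P := Finset.mem_filter.mp (Finset.mem_filter.mp hpQ).1 |>.1
    have hpcond : cond p := (Finset.mem_filter.mp (Finset.mem_filter.mp hpQ).1).2
    have hpq : p ≠ q := fun h => hq (h ▸ hpP)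
    -- the erased set
    set S := Q.erase p with hSdef
    have hScard : k ≤ S.card := by
      have h2 : S.card = Q.card - 1 := by rw [hSdef]; exact Finset.card_erase_of_mem hpQ
      omega
    have hSsub : (↑S : Set (EuclideanSpace ℝ (Fin d))) ⊆
        {s : EuclideanSpace ℝ (Fin d) |
          s ∈ insert q (P : Set (EuclideanSpace ℝ (Fin d))) ∧ s ≠ p ∧ dist p s < dist p q} := by
      intro s hs
      rw [Finset.mem_coe, hSdef, Finset.mem_erase] at hs
      obtain ⟨hsp, hsQ⟩ := hs
      have hsP : s ∈ P := Finset.mem_filter.mp (Finset.mem_filter.mp hsQ).1 |>.1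
      have hsq : s ≠ q := fun h => hq (h ▸ hsP)
      have hfl_p : f (p - q) = l := (Finset.mem_filter.mp hpQ).2
      have hfl_s : f (s - q) = l := (Finset.mem_filter.mp hsQ).2
      have hpC : p - q ∈ C l := hfl_p ▸ hf (p - q)
      have hsC : s - q ∈ C l := hfl_s ▸ hf (s - q)
      have hpne : p - q ≠ 0 := sub_ne_zero.mpr hpq
      have hsne : s - q ≠ 0 := sub_ne_zero.mpr hsq
      have hang := hangle l (p - q) hpC (s - q) hsC hpne hsne
      have hmax : dist s q ≤ dist p q := hpmax s hsQ
      have hdistle : dist p s ≤ dist p q := by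
        have hnorm : dist p s = ‖(p - q) - (s - q)‖ := by
          rw [dist_eq_norm]; congr 1; abel
        have hnp : ‖p - q‖ = dist p q := (dist_eq_norm p q).symm
        have hns : ‖s - q‖ = dist s q := (dist_eq_norm s q).symm
        rcases le_total ‖s - q‖ ‖p - q‖ with hle | hle
        · have := key_ineq (s - q) (p - q) hsne hpne
            (InnerProductGeometry.angle_comm (p - q) (s - q) ▸ hang) hle
          rw [norm_sub_rev] at this
          rw [hnorm]; rw [hnp] at this; exact this
        · have := key_ineq (p - q) (s - q) hpne hsne hang hle
          rw [hnorm]; rw [hns] at this; linarith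
      have hstrict : dist p s < dist p q := by
        rcases lt_or_eq_of_le hdistle with h | h
        · exact h
        · exfalso
          have hmem : ∀ y, y ∈ P → y ∈ insert q (P : Set (EuclideanSpace ℝ (Fin d))) :=
            fun y hy => Set.mem_insert_of_mem _ hy
          have hqmem : q ∈ insert q (P : Set (EuclideanSpace ℝ (Fin d))) := Set.mem_insert _ _
          rcases hdist p (hmem p hpP) s (hmem s hsP) p (hmem p hpP) q hqmem h with
            ⟨_, h2⟩ | ⟨h1, _⟩ | ⟨h1, _⟩
          · exact hsq h2
          · exact hpq h1
          · exact hsp (h1.symm)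
      exact ⟨Set.mem_insert_of_mem _ hsP, hsp, hstrict⟩
    have hfin : ({s : EuclideanSpace ℝ (Fin d) |
        s ∈ insert q (P : Set (EuclideanSpace ℝ (Fin d))) ∧ s ≠ p ∧ dist p s < dist p q}).Finite := by
      apply Set.Finite.subset ((P.finite_toSet).insert q)
      intro s hs; exact hs.1
    have hle := Set.ncard_le_ncard hSsub hfin
    rw [Set.ncard_coe_finset] at hle
    rw [hcond] at hpcond
    omega
  -- sum up
  have hcover' : R ⊆ Finset.univ.biUnion (fun l : Fin c => R.filter (fun p => f (p - q) = l)) := by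
    intro p hp
    exact Finset.mem_biUnion.mpr ⟨f (p - q), Finset.mem_univ _, Finset.mem_filter.mpr ⟨hp, rfl⟩⟩
  calc R.card ≤ (Finset.univ.biUnion (fun l : Fin c => R.filter (fun p => f (p - q) = l))).card :=
        Finset.card_le_card hcover'
    _ ≤ ∑ l : Fin c, (R.filter (fun p => f (p - q) = l)).card := Finset.card_biUnion_le
    _ ≤ ∑ _l : Fin c, k := Finset.sum_le_sum (fun l _ => hper l)
    _ = c * k := by simp [Finset.sum_const, Finset.card_univ]
end

section
/- Let f_1, …, f_n : ℝ → ℝ be totally-defined continuous functions such that each pair intersects at most once (s = 1, e.g., distinct affine functions). Then the lower envelope min_i f_i(t) has at most n - 1 breakpoints; equivalently, the number of maximal intervals on which the minimizing index is constant is at most n (λ_1(n) = n). -/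
/-!
If the minimizer sequence of the lower envelope repeated an index `a`, then, since consecutive
minimizers differ, the next minimizer `b` would sit between two occurrences of `a`: the
difference `f a - f b` changes sign twice, so by the intermediate value theorem `f a` and `f b`
meet twice. Hence the minimizers are pairwise distinct, and there are at most `n` of them.
-/

open Set Function

section Crossings

variable {α δ : Type*} [ConditionallyCompleteLinearOrder α] [TopologicalSpace α] [OrderTopology α]
  [DenselyOrdered α] [LinearOrder δ] [TopologicalSpace δ] [OrderClosedTopology δ]
  {u v : α → δ}

theorem exists_mem_Ioo_eq_of_lt_of_gt (hu : Continuous u) (hv : Continuous v) {x y : α}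
    (hxy : x ≤ y) (hx : u x < v x) (hy : v y < u y) : ∃ s ∈ Ioo x y, u s = v s := by
  obtain ⟨s, ⟨hxs, hsy⟩, hs⟩ := isPreconnected_Icc.intermediate_value₂ (left_mem_Icc.2 hxy)
    (right_mem_Icc.2 hxy) hu.continuousOn hv.continuousOn hx.le hy.le
  refine ⟨s, ⟨hxs.lt_of_ne ?_, hsy.lt_of_ne ?_⟩, hs⟩ <;> rintro rfl
  exacts [hx.ne hs, hy.ne' hs]

theorem not_subsingleton_setOf_eq_of_lt_of_gt_of_lt (hu : Continuous u) (hv : Continuous v)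
    {x y z : α} (hxy : x ≤ y) (hyz : y ≤ z) (hx : u x < v x) (hy : v y < u y) (hz : u z < v z) :
    ¬ {s | u s = v s}.Subsingleton := by
  obtain ⟨s₁, hs₁, hs₁_eq⟩ := exists_mem_Ioo_eq_of_lt_of_gt hu hv hxy hx hy
  obtain ⟨s₂, hs₂, hs₂_eq⟩ := exists_mem_Ioo_eq_of_lt_of_gt hv hu hyz hy hz
  exact fun h => (hs₁.2.trans hs₂.1).ne (h hs₁_eq hs₂_eq.symm)

end Crossings

/-- A Davenport–Schinzel sequence of order 1 has no repeated letter. -/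
theorem Fin.injective_of_no_alternation {β : Type*} {m : ℕ} {g : Fin (m + 1) → β}
    (hadj : ∀ j : Fin m, g j.castSucc ≠ g j.succ)
    (halt : ∀ j k l, j < k → k < l → g j = g l → g k = g j) : Injective g := by
  have hlt : ∀ j l, j < l → g j ≠ g l := by
    intro j l hjl hgjl
    set j' := j.castPred (Fin.ne_last_of_lt hjl)
    have hj' : j'.castSucc = j := Fin.castSucc_castPred j _
    rcases (Fin.castSucc_lt_iff_succ_le.1 (hj' ▸ hjl)).lt_or_eq with hl | hl
    · exact hadj j' (hj' ▸ (halt j j'.succ l (hj' ▸ j'.castSucc_lt_succ) hl hgjl).symm)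
    · exact hadj j' (hj' ▸ hl ▸ hgjl)
  intro j l h
  by_contra hne
  rcases lt_or_gt_of_ne hne with hjl | hlj
  exacts [hlt j l hjl h, hlt l j hlj h.symm]

/-- For `n` continuous functions on `ℝ` such that each pair intersects at most
once, the lower envelope has at most `n` pieces: any sequence of times `t_0 < ⋯ < t_m`, at
each of which some function is the unique minimizer and where consecutive minimizers differ,
has length `m + 1 ≤ n`. -/
theorem stmt10 (n : ℕ) (f : Fin n → ℝ → ℝ)
    (hcont : ∀ i, Continuous (f i))
    (hs : ∀ i j : Fin n, i ≠ j → Set.Subsingleton {t : ℝ | f i t = f j t})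
    (m : ℕ) (t : Fin (m + 1) → ℝ) (ht : StrictMono t)
    (g : Fin (m + 1) → Fin n)
    (hmin : ∀ j, ∀ i, i ≠ g j → f (g j) (t j) < f i (t j))
    (hadj : ∀ j : Fin m, g j.castSucc ≠ g j.succ) :
    m + 1 ≤ n := by
  refine Fin.le_of_injective g (Fin.injective_of_no_alternation hadj ?_)
  intro j k l hjk hkl hjl
  by_contra hkj
  refine not_subsingleton_setOf_eq_of_lt_of_gt_of_lt (hcont (g j)) (hcont (g k))
    (ht hjk).le (ht hkl).le (hmin j (g k) hkj) (hmin k (g j) (Ne.symm hkj)) ?_ (hs _ _ (Ne.symm hkj))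
  rw [hjl] at hkj ⊢
  exact hmin l (g k) hkj
end

section
/- Let f_1, …, f_n : ℝ → ℝ be continuous functions such that any two distinct functions intersect at most twice (s = 2). Then the lower envelope min_i f_i has at most 2n - 2 breakpoints (λ_2(n) = 2n - 1 pieces). -/
/-!
Whenever `f a` and `f b` are the unique minimizers at two times, `f a - f b` changes sign in
between and hence vanishes there. So if the sequence of minimizers contained a subsequence
`a, b, a, b`, the functions `f a` and `f b` would meet three times. The sequence of minimizers is
therefore a Davenport–Schinzel sequence of order 2 on at most `n` symbols, whose length is at most
`2n - 1`: splitting such a sequence `a :: s ++ a :: r` at the second occurrence of its head, the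
parts `s` and `a :: r` share no symbol, since a common `c` would produce `a, c, a, c`.
-/

namespace List

variable {α : Type*}

def AbabFree (l : List α) : Prop :=
  ∀ a b, a ≠ b → ¬ [a, b, a, b] <+ l

theorem AbabFree.sublist {l₁ l₂ : List α} (h : l₂.AbabFree) (h₁₂ : l₁ <+ l₂) : l₁.AbabFree :=
  fun a b hab habab => h a b hab (habab.trans h₁₂)

theorem exists_strictMono_of_sublist_ofFn {k : ℕ} {l : List α} {g : Fin k → α}
    (h : l <+ ofFn g) : ∃ e : Fin l.length → Fin k, StrictMono e ∧ ∀ i, l.get i = g (e i) := by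
  obtain ⟨e, he⟩ := sublist_iff_exists_fin_orderEmbedding_get_eq.mp h
  exact ⟨Fin.cast length_ofFn ∘ e, (Fin.castOrderIso length_ofFn).strictMono.comp e.strictMono,
    fun i => (he i).trans (get_ofFn g _)⟩

variable [DecidableEq α]

theorem length_le_two_mul_card_toFinset_sub_one_of_ababFree :
    ∀ {l : List α}, l ≠ [] → l.IsChain (· ≠ ·) → l.AbabFree →
      l.length ≤ 2 * l.toFinset.card - 1
  | [_], _, _, _ => by simp
  | a :: b :: tl, _, hchain, habab => by
    by_cases ha : a ∈ b :: tl
    · obtain ⟨s, r, hsr, has⟩ := eq_append_cons_of_mem ha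
      have hs : s ≠ [] := by
        rintro rfl
        rw [nil_append, cons.injEq] at hsr
        exact (isChain_cons_cons.mp hchain).1 hsr.1.symm
      have hdisj : _root_.Disjoint s.toFinset (a :: r).toFinset := by
        refine Finset.disjoint_left.mpr fun c hcs hcr => ?_
        rw [mem_toFinset] at hcs hcr
        obtain rfl | hcr := mem_cons.mp hcr
        · exact has hcs
        · refine habab a c (fun h => has (h ▸ hcs)) ?_
          rw [hsr]
          exact ((singleton_sublist.mpr hcs).append
            ((singleton_sublist.mpr hcr).cons_cons a)).cons_cons a
      have hsl : s <:+: a :: b :: tl :=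
        hsr ▸ (prefix_append s (a :: r)).isInfix.trans (suffix_cons a _).isInfix
      have hrl : a :: r <:+: a :: b :: tl :=
        hsr ▸ (suffix_append s (a :: r)).isInfix.trans (suffix_cons a _).isInfix
      have hlen : tl.length = s.length + r.length := by
        have := congrArg length hsr
        simp only [length_cons, length_append] at this
        omega
      have ihs := length_le_two_mul_card_toFinset_sub_one_of_ababFree hs
        (hchain.infix hsl) (habab.sublist hsl.sublist)
      have ihr := length_le_two_mul_card_toFinset_sub_one_of_ababFree (cons_ne_nil a r)
        (hchain.infix hrl) (habab.sublist hrl.sublist)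
      have hcard : (a :: b :: tl).toFinset.card = s.toFinset.card + (a :: r).toFinset.card := by
        rw [← Finset.card_union_of_disjoint hdisj, hsr]
        congr 1
        ext x
        simp
      have : 0 < s.toFinset.card := by simpa [Finset.card_pos, toFinset_nonempty_iff] using hs
      have : 0 < (a :: r).toFinset.card := Finset.card_pos.mpr ⟨a, by simp⟩
      simp only [length_cons] at hlen ihr ⊢
      omega
    · have ih := length_le_two_mul_card_toFinset_sub_one_of_ababFree (cons_ne_nil b tl)
        hchain.tail (habab.sublist (sublist_cons_self a _))
      rw [toFinset_cons, Finset.card_insert_of_notMem (by simpa using ha), length_cons]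
      omega
termination_by l => l.length

end List

theorem two_lt_card_of_alternating {α δ : Type*} [TopologicalSpace α]
    [ConditionallyCompleteLinearOrder α] [OrderTopology α] [DenselyOrdered α]
    [LinearOrder δ] [TopologicalSpace δ] [OrderClosedTopology δ]
    {F : α → δ} (hF : Continuous F) {c : δ} {x₀ x₁ x₂ x₃ : α}
    (h₀₁ : x₀ < x₁) (h₁₂ : x₁ < x₂) (h₂₃ : x₂ < x₃)
    (h₀ : F x₀ < c) (h₁ : c < F x₁) (h₂ : F x₂ < c) (h₃ : c < F x₃)
    {S : Finset α} (hS : {x | F x = c} ⊆ S) : 2 < S.card := by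
  classical
  obtain ⟨y₁, hy₁, hFy₁⟩ := intermediate_value_Ioo h₀₁.le hF.continuousOn ⟨h₀, h₁⟩
  obtain ⟨y₂, hy₂, hFy₂⟩ := intermediate_value_Ioo' h₁₂.le hF.continuousOn ⟨h₂, h₁⟩
  obtain ⟨y₃, hy₃, hFy₃⟩ := intermediate_value_Ioo h₂₃.le hF.continuousOn ⟨h₂, h₃⟩
  have h₁₂ : y₁ < y₂ := hy₁.2.trans hy₂.1
  have h₂₃ : y₂ < y₃ := hy₂.2.trans hy₃.1
  have hsub : ({y₁, y₂, y₃} : Finset α) ⊆ S := by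
    simp only [Finset.insert_subset_iff, Finset.singleton_subset_iff]
    exact ⟨hS hFy₁, hS hFy₂, hS hFy₃⟩
  have hcard : ({y₁, y₂, y₃} : Finset α).card = 3 :=
    Finset.card_eq_three.mpr ⟨y₁, y₂, y₃, h₁₂.ne, (h₁₂.trans h₂₃).ne, h₂₃.ne, rfl⟩
  have := Finset.card_le_card hsub
  omega

theorem ababFree_ofFn_of_unique_minimizer {ι α : Type*} [TopologicalSpace α]
    [ConditionallyCompleteLinearOrder α] [OrderTopology α] [DenselyOrdered α]
    {f : ι → α → ℝ} (hcont : ∀ i, Continuous (f i))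
    (hs : ∀ i j, i ≠ j → ∃ S : Finset α, {x | f i x = f j x} ⊆ ↑S ∧ S.card ≤ 2)
    {k : ℕ} {t : Fin k → α} (ht : StrictMono t) {g : Fin k → ι}
    (hmin : ∀ j, ∀ i, i ≠ g j → f (g j) (t j) < f i (t j)) :
    (List.ofFn g).AbabFree := by
  intro a b hab hsub
  obtain ⟨e, he, hg⟩ := List.exists_strictMono_of_sublist_ofFn hsub
  have ha : ∀ j, a = g j → f a (t j) - f b (t j) < 0 := fun j hj =>
    sub_neg.mpr (hj ▸ hmin j b (hj ▸ hab.symm))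
  have hb : ∀ j, b = g j → 0 < f a (t j) - f b (t j) := fun j hj =>
    sub_pos.mpr (hj ▸ hmin j a (hj ▸ hab))
  obtain ⟨S, hS, hScard⟩ := hs a b hab
  have := two_lt_card_of_alternating ((hcont a).sub (hcont b))
    (ht (he (by simp))) (ht (he (by simp [Fin.lt_def]))) (ht (he (by simp [Fin.lt_def])))
    (ha _ (hg 0)) (hb _ (hg 1)) (ha _ (hg 2)) (hb _ (hg 3))
    (S := S) fun x hx => hS (sub_eq_zero.mp hx)
  omega

/-- For `n` continuous functions on `ℝ` such that each pair intersects at most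
twice, the lower envelope has at most `2n - 1` pieces: any sequence of times `t_0 < ⋯ < t_m`,
at each of which some function is the unique minimizer and where consecutive minimizers
differ, has length `m + 1 ≤ 2n - 1`. -/
theorem stmt11 (n : ℕ) (f : Fin n → ℝ → ℝ)
    (hcont : ∀ i, Continuous (f i))
    (hs : ∀ i j : Fin n, i ≠ j → ∃ S : Finset ℝ,
      {t : ℝ | f i t = f j t} ⊆ ↑S ∧ S.card ≤ 2)
    (m : ℕ) (t : Fin (m + 1) → ℝ) (ht : StrictMono t)
    (g : Fin (m + 1) → Fin n)
    (hmin : ∀ j, ∀ i, i ≠ g j → f (g j) (t j) < f i (t j))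
    (hadj : ∀ j : Fin m, g j.castSucc ≠ g j.succ) :
    m + 1 ≤ 2 * n - 1 := by
  have hchain : (List.ofFn g).IsChain (· ≠ ·) :=
    List.isChain_ofFn.mpr fun i hi => hadj ⟨i, by omega⟩
  have hlen := List.length_le_two_mul_card_toFinset_sub_one_of_ababFree
    (mt List.ofFn_eq_nil_iff.mp m.succ_ne_zero) hchain
    (ababFree_ofFn_of_unique_minimizer hcont hs ht hmin)
  have hcard : (List.ofFn g).toFinset.card ≤ n :=
    (Finset.card_le_univ _).trans_eq (Fintype.card_fin n)
  rw [List.length_ofFn] at hlen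
  omega
end
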